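/- arXiv:2207.08700 — 9 statements merged into one kernel-verified Lean document; each statement's English description precedes it below -/
import Mathlib

section
/- Let m ≥ 0 and let u = (u₁,u₂) : [−1,1] → ℂ² be continuously differentiable and satisfy the infinite mass boundary conditions. Then ∫_{−1}^{1} (|−u₂′(t) + m·u₁(t)|² + |u₁′(t) − m·u₂(t)|²) dt = ∫_{−1}^{1} (|u₁′(t)|² + |u₂′(t)|²) dt + m²·∫_{−1}^{1} (|u₁(t)|² + |u₂(t)|²) dt + m·(|u₁(1)|² + |u₂(1)|² + |u₁(−1)|² + |u₂(−1)|²). -/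
/-! Expanding the two squares leaves `‖u'‖² + m²‖u‖²` plus the cross term
`-2m Re(u₁' ū₂ + u₁ ū₂')`, which is `-2m` times the derivative of `Re(u₁ ū₂)`. The infinite
mass boundary conditions make `Re(u₁ ū₂)` equal to `-(|u(1)|²)/2` at `1` and `(|u(-1)|²)/2`
at `-1`, so integrating the cross term gives the boundary term. -/

open MeasureTheory Set

open scoped ComplexConjugate

theorem norm_sq_add_norm_sq_transverse_eq (m : ℝ) (a b a' b' : ℂ) :
    ‖-b' + (m : ℂ) * a‖ ^ 2 + ‖a' - (m : ℂ) * b‖ ^ 2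
      = (‖a'‖ ^ 2 + ‖b'‖ ^ 2) + m ^ 2 * (‖a‖ ^ 2 + ‖b‖ ^ 2)
        - 2 * m * (a' * conj b + a * conj b').re := by
  simp only [Complex.sq_norm, Complex.normSq_apply, Complex.add_re, Complex.add_im,
    Complex.sub_re, Complex.sub_im, Complex.neg_re, Complex.neg_im, Complex.mul_re,
    Complex.mul_im, Complex.conj_re, Complex.conj_im, Complex.ofReal_re, Complex.ofReal_im]
  ring

theorem integral_re_deriv_mul_conj_eq_sub {a b : ℝ} {u v u' v' : ℝ → ℂ}
    (hu : ∀ x ∈ uIcc a b, HasDerivWithinAt u (u' x) (uIcc a b) x)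
    (hv : ∀ x ∈ uIcc a b, HasDerivWithinAt v (v' x) (uIcc a b) x)
    (hu' : ContinuousOn u' (uIcc a b)) (hv' : ContinuousOn v' (uIcc a b)) :
    ∫ x in a..b, (u' x * conj (v x) + u x * conj (v' x)).re
      = (u b * conj (v b)).re - (u a * conj (v a)).re := by
  have hu_cont : ContinuousOn u (uIcc a b) := fun x hx => (hu x hx).continuousWithinAt
  have hv_cont : ContinuousOn v (uIcc a b) := fun x hx => (hv x hx).continuousWithinAt
  have hint : IntervalIntegrable (fun x => u' x * conj (v x) + u x * conj (v' x)) volume a b :=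
    ((hu'.mul hv_cont.star).add (hu_cont.mul hv'.star)).intervalIntegrable
  have parts : ∫ x in a..b, u' x * conj (v x) + u x * conj (v' x)
      = u b * conj (v b) - u a * conj (v a) :=
    intervalIntegral.integral_deriv_mul_eq_sub_of_hasDerivWithinAt hu
      (fun x hx => (hv x hx).star) hu'.intervalIntegrable hv'.star.intervalIntegrable
  rw [← Complex.sub_re, ← parts]
  exact intervalIntegral.intervalIntegral_re hint

theorem transverse_form_identity_general
    (m : ℝ) (u₁ u₂ u₁' u₂' : ℝ → ℂ)
    (hu₁ : ∀ t ∈ Icc (-1 : ℝ) 1, HasDerivWithinAt u₁ (u₁' t) (Icc (-1 : ℝ) 1) t)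
    (hu₂ : ∀ t ∈ Icc (-1 : ℝ) 1, HasDerivWithinAt u₂ (u₂' t) (Icc (-1 : ℝ) 1) t)
    (hc₁ : ContinuousOn u₁' (Icc (-1 : ℝ) 1))
    (hc₂ : ContinuousOn u₂' (Icc (-1 : ℝ) 1))
    (hbc1 : u₂ 1 = -u₁ 1) (hbc2 : u₂ (-1) = u₁ (-1)) :
    (∫ t in (-1 : ℝ)..1, (‖-u₂' t + (m : ℂ) * u₁ t‖ ^ 2 + ‖u₁' t - (m : ℂ) * u₂ t‖ ^ 2))
      = (∫ t in (-1 : ℝ)..1, (‖u₁' t‖ ^ 2 + ‖u₂' t‖ ^ 2))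
        + m ^ 2 * (∫ t in (-1 : ℝ)..1, (‖u₁ t‖ ^ 2 + ‖u₂ t‖ ^ 2))
        + m * (‖u₁ 1‖ ^ 2 + ‖u₂ 1‖ ^ 2 + ‖u₁ (-1)‖ ^ 2 + ‖u₂ (-1)‖ ^ 2) := by
  rw [← uIcc_of_le (by norm_num : (-1 : ℝ) ≤ 1)] at hu₁ hu₂ hc₁ hc₂
  have hcu₁ : ContinuousOn u₁ (uIcc (-1 : ℝ) 1) := fun t ht => (hu₁ t ht).continuousWithinAt
  have hcu₂ : ContinuousOn u₂ (uIcc (-1 : ℝ) 1) := fun t ht => (hu₂ t ht).continuousWithinAt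
  have hiA : IntervalIntegrable (fun t => ‖u₁' t‖ ^ 2 + ‖u₂' t‖ ^ 2) volume (-1) 1 :=
    ((hc₁.norm.pow 2).add (hc₂.norm.pow 2)).intervalIntegrable
  have hiB : IntervalIntegrable (fun t => m ^ 2 * (‖u₁ t‖ ^ 2 + ‖u₂ t‖ ^ 2)) volume (-1) 1 :=
    (((hcu₁.norm.pow 2).add (hcu₂.norm.pow 2)).intervalIntegrable).const_mul _
  have hiG : IntervalIntegrable
      (fun t => 2 * m * (u₁' t * conj (u₂ t) + u₁ t * conj (u₂' t)).re) volume (-1) 1 :=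
    (Complex.continuous_re.comp_continuousOn
      ((hc₁.mul hcu₂.star).add (hcu₁.mul hc₂.star))).intervalIntegrable.const_mul _
  simp_rw [norm_sq_add_norm_sq_transverse_eq]
  rw [intervalIntegral.integral_sub (hiA.add hiB) hiG, intervalIntegral.integral_add hiA hiB,
    intervalIntegral.integral_const_mul, intervalIntegral.integral_const_mul,
    integral_re_deriv_mul_conj_eq_sub hu₁ hu₂ hc₁ hc₂, hbc1, hbc2, norm_neg, map_neg, mul_neg,
    Complex.mul_conj', Complex.mul_conj']
  norm_cast
  ring

/-- For `m ≥ 0` and `u = (u₁, u₂) : [-1,1] → ℂ²` continuously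
differentiable satisfying the infinite mass boundary conditions
`u₂(1) = -u₁(1)`, `u₂(-1) = u₁(-1)`, the `L²`-norm of `T(m)u` is
`‖u'‖² + m²‖u‖² + m(|u(1)|² + |u(-1)|²)`. -/
theorem transverse_form_identity
    (m : ℝ) (hm : 0 ≤ m) (u₁ u₂ u₁' u₂' : ℝ → ℂ)
    (hu₁ : ∀ t ∈ Icc (-1 : ℝ) 1, HasDerivWithinAt u₁ (u₁' t) (Icc (-1 : ℝ) 1) t)
    (hu₂ : ∀ t ∈ Icc (-1 : ℝ) 1, HasDerivWithinAt u₂ (u₂' t) (Icc (-1 : ℝ) 1) t)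
    (hc₁ : ContinuousOn u₁' (Icc (-1 : ℝ) 1))
    (hc₂ : ContinuousOn u₂' (Icc (-1 : ℝ) 1))
    (hbc1 : u₂ 1 = -u₁ 1) (hbc2 : u₂ (-1) = u₁ (-1)) :
    (∫ t in (-1 : ℝ)..1, (‖-u₂' t + (m : ℂ) * u₁ t‖ ^ 2 + ‖u₁' t - (m : ℂ) * u₂ t‖ ^ 2))
      = (∫ t in (-1 : ℝ)..1, (‖u₁' t‖ ^ 2 + ‖u₂' t‖ ^ 2))
        + m ^ 2 * (∫ t in (-1 : ℝ)..1, (‖u₁ t‖ ^ 2 + ‖u₂ t‖ ^ 2))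
        + m * (‖u₁ 1‖ ^ 2 + ‖u₂ 1‖ ^ 2 + ‖u₁ (-1)‖ ^ 2 + ‖u₂ (-1)‖ ^ 2) :=
  transverse_form_identity_general m u₁ u₂ u₁' u₂' hu₁ hu₂ hc₁ hc₂ hbc1 hbc2
end

section
/- Let m ≥ 0, let E ∈ ℝ, and let u = (u₁,u₂) : [−1,1] → ℂ² be continuously differentiable, not identically zero, satisfy the infinite mass boundary conditions, and satisfy −u₂′(t) + m·u₁(t) = E·u₁(t) and u₁′(t) − m·u₂(t) = E·u₂(t) for all t ∈ [−1,1]. Then E² > m². -/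
open MeasureTheory Set

private lemma mono_aux {f f' : ℝ → ℝ}
    (hf : ∀ t ∈ Icc (-1 : ℝ) 1, HasDerivWithinAt f (f' t) (Icc (-1 : ℝ) 1) t)
    (h0 : ∀ t ∈ Icc (-1 : ℝ) 1, 0 ≤ f' t) : MonotoneOn f (Icc (-1 : ℝ) 1) := by
  have key : ∀ x ∈ Ioo (-1 : ℝ) 1, HasDerivAt f (f' x) x := by
    intro x hx
    exact (hf x (Ioo_subset_Icc_self hx)).hasDerivAt (Icc_mem_nhds hx.1 hx.2)
  apply monotoneOn_of_deriv_nonneg (convex_Icc _ _)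
    (fun t ht => (hf t ht).continuousWithinAt)
  · rw [interior_Icc]
    exact fun x hx => ((key x hx).differentiableAt).differentiableWithinAt
  · rw [interior_Icc]
    intro x hx
    rw [(key x hx).deriv]
    exact h0 x (Ioo_subset_Icc_self hx)

private lemma re_mul_conj_deriv {v w : ℝ → ℂ} {v' w' : ℂ} {t : ℝ}
    (hv : HasDerivWithinAt v v' (Icc (-1 : ℝ) 1) t)
    (hw : HasDerivWithinAt w w' (Icc (-1 : ℝ) 1) t) :
    HasDerivWithinAt (fun s => (v s * (starRingEnd ℂ) (w s)).re)
      ((v' * (starRingEnd ℂ) (w t) + v t * (starRingEnd ℂ) w').re)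
      (Icc (-1 : ℝ) 1) t := by
  have h := hv.mul hw.star
  exact Complex.reCLM.hasFDerivAt.comp_hasDerivWithinAt t h

/-- If `m ≥ 0` and `u = (u₁,u₂)` is a nontrivial continuously
differentiable eigenfunction of the transverse Dirac operator `T(m)` with
infinite mass boundary conditions, for the eigenvalue `E`, then `E² > m²`. -/
theorem transverse_eigenvalue_gap
    (m E : ℝ) (hm : 0 ≤ m) (u₁ u₂ u₁' u₂' : ℝ → ℂ)
    (hu₁ : ∀ t ∈ Icc (-1 : ℝ) 1, HasDerivWithinAt u₁ (u₁' t) (Icc (-1 : ℝ) 1) t)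
    (hu₂ : ∀ t ∈ Icc (-1 : ℝ) 1, HasDerivWithinAt u₂ (u₂' t) (Icc (-1 : ℝ) 1) t)
    (hc₁ : ContinuousOn u₁' (Icc (-1 : ℝ) 1))
    (hc₂ : ContinuousOn u₂' (Icc (-1 : ℝ) 1))
    (hne : ∃ t ∈ Icc (-1 : ℝ) 1, ¬(u₁ t = 0 ∧ u₂ t = 0))
    (hbc1 : u₂ 1 = -u₁ 1) (hbc2 : u₂ (-1) = u₁ (-1))
    (heig : ∀ t ∈ Icc (-1 : ℝ) 1,
      -u₂' t + (m : ℂ) * u₁ t = (E : ℂ) * u₁ t ∧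
      u₁' t - (m : ℂ) * u₂ t = (E : ℂ) * u₂ t) :
    m ^ 2 < E ^ 2 := by
  by_contra hlt
  push_neg at hlt
  -- so E^2 ≤ m^2, hence -m ≤ E ≤ m
  have hmE1 : 0 ≤ m + E := by nlinarith [sq_nonneg (m + E)]
  have hmE2 : 0 ≤ m - E := by nlinarith [sq_nonneg (m - E)]
  have hu1' : ∀ t ∈ Icc (-1 : ℝ) 1, u₁' t = ((m : ℂ) + E) * u₂ t := by
    intro t ht
    have h := (heig t ht).2
    linear_combination h
  have hu2' : ∀ t ∈ Icc (-1 : ℝ) 1, u₂' t = ((m : ℂ) - E) * u₁ t := by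
    intro t ht
    have h := (heig t ht).1
    linear_combination -h
  -- the function f = Re(u₁ conj u₂) is monotone on [-1,1]
  set f : ℝ → ℝ := fun t => (u₁ t * (starRingEnd ℂ) (u₂ t)).re with hfdef
  have hf : ∀ t ∈ Icc (-1 : ℝ) 1, HasDerivWithinAt f
      ((m + E) * Complex.normSq (u₂ t) + (m - E) * Complex.normSq (u₁ t))
      (Icc (-1 : ℝ) 1) t := by
    intro t ht
    have h := re_mul_conj_deriv (hu₁ t ht) (hu₂ t ht)
    rw [hu1' t ht, hu2' t ht] at h
    convert h using 1
    simp [Complex.normSq_apply, Complex.mul_re, Complex.mul_im]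
    all_goals ring
  have hfmono : MonotoneOn f (Icc (-1 : ℝ) 1) := by
    apply mono_aux hf
    intro t ht
    have := Complex.normSq_nonneg (u₁ t)
    have := Complex.normSq_nonneg (u₂ t)
    positivity
  have hm1 : (-1 : ℝ) ∈ Icc (-1 : ℝ) 1 := by norm_num
  have hp1 : (1 : ℝ) ∈ Icc (-1 : ℝ) 1 := by norm_num
  have hle : f (-1) ≤ f 1 := hfmono hm1 hp1 (by norm_num)
  have hf1 : f 1 = -Complex.normSq (u₁ 1) := by
    simp [hfdef, hbc1, Complex.normSq_apply]
    all_goals ring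
  have hfm1 : f (-1) = Complex.normSq (u₁ (-1)) := by
    simp [hfdef, hbc2, Complex.normSq_apply]
    all_goals ring
  have hz1 : u₁ 1 = 0 := by
    rw [hf1, hfm1] at hle
    have h1 := Complex.normSq_nonneg (u₁ 1)
    have h2 := Complex.normSq_nonneg (u₁ (-1))
    have : Complex.normSq (u₁ 1) = 0 := by linarith
    exact Complex.normSq_eq_zero.mp this
  have hz2 : u₂ 1 = 0 := by rw [hbc1, hz1, neg_zero]
  -- Gronwall-type argument: h t = exp(2mt) (|u₁|² + |u₂|²) is monotone
  set g : ℝ → ℝ := fun t => Complex.normSq (u₁ t) + Complex.normSq (u₂ t) with hgdef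
  have hgd : ∀ t ∈ Icc (-1 : ℝ) 1,
      HasDerivWithinAt g (4 * m * f t) (Icc (-1 : ℝ) 1) t := by
    intro t ht
    have h1 := re_mul_conj_deriv (hu₁ t ht) (hu₁ t ht)
    have h2 := re_mul_conj_deriv (hu₂ t ht) (hu₂ t ht)
    rw [hu1' t ht] at h1
    rw [hu2' t ht] at h2
    have h := h1.add h2
    have heq : ∀ s, (u₁ s * (starRingEnd ℂ) (u₁ s)).re
        + (u₂ s * (starRingEnd ℂ) (u₂ s)).re = g s := by
      intro s
      simp [hgdef, Complex.normSq_apply, Complex.mul_re]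
      all_goals ring
    have h' : HasDerivWithinAt g
        ((((m:ℂ) + E) * u₂ t * (starRingEnd ℂ) (u₁ t)
          + u₁ t * (starRingEnd ℂ) (((m:ℂ) + E) * u₂ t)).re
        + (((m:ℂ) - E) * u₁ t * (starRingEnd ℂ) (u₂ t)
          + u₂ t * (starRingEnd ℂ) (((m:ℂ) - E) * u₁ t)).re)
        (Icc (-1 : ℝ) 1) t := by
      exact h.congr (fun s _ => (heq s).symm) (heq t).symm
    convert h' using 1
    simp only [hfdef, Complex.add_re, Complex.mul_re, Complex.mul_im, Complex.conj_re,
      Complex.conj_im, Complex.add_im, Complex.ofReal_re, Complex.ofReal_im,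
      Complex.sub_re, Complex.sub_im]
    all_goals ring
  set F : ℝ → ℝ := fun t => Real.exp (2 * m * t) * g t with hFdef
  have hFd : ∀ t ∈ Icc (-1 : ℝ) 1, HasDerivWithinAt F
      (2 * m * Real.exp (2 * m * t) * g t + Real.exp (2 * m * t) * (4 * m * f t))
      (Icc (-1 : ℝ) 1) t := by
    intro t ht
    have he : HasDerivWithinAt (fun s => Real.exp (2 * m * s))
        (2 * m * Real.exp (2 * m * t)) (Icc (-1 : ℝ) 1) t := by
      have := ((hasDerivAt_id t).const_mul (2 * m)).exp
      simpa [mul_comm] using this.hasDerivWithinAt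
    exact he.mul (hgd t ht)
  have hFmono : MonotoneOn F (Icc (-1 : ℝ) 1) := by
    apply mono_aux hFd
    intro t ht
    have key : g t + 2 * f t = Complex.normSq (u₁ t + u₂ t) := by
      simp [hgdef, hfdef, Complex.normSq_apply, Complex.mul_re]
      all_goals ring
    have h1 : 0 ≤ g t + 2 * f t := key ▸ Complex.normSq_nonneg _
    have h2 : (0:ℝ) < Real.exp (2 * m * t) := Real.exp_pos _
    have h3 : 2 * m * Real.exp (2 * m * t) * g t + Real.exp (2 * m * t) * (4 * m * f t)
        = 2 * m * Real.exp (2 * m * t) * (g t + 2 * f t) := by ring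
    rw [h3]
    exact mul_nonneg (mul_nonneg (by linarith) h2.le) h1
  have hF1 : F 1 = 0 := by simp [hFdef, hgdef, hz1, hz2]
  obtain ⟨t₀, ht₀, hne₀⟩ := hne
  have hFt : F t₀ ≤ 0 := hF1 ▸ hFmono ht₀ hp1 ht₀.2
  have hgt : 0 ≤ g t₀ := by
    have := Complex.normSq_nonneg (u₁ t₀)
    have := Complex.normSq_nonneg (u₂ t₀)
    simp only [hgdef]; linarith
  have hFt0 : 0 ≤ F t₀ := mul_nonneg (Real.exp_pos _).le hgt
  have hg0 : g t₀ = 0 := by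
    have h2 : (0:ℝ) < Real.exp (2 * m * t₀) := Real.exp_pos _
    have hgle : g t₀ ≤ 0 := by
      by_contra hgg
      push_neg at hgg
      exact absurd hFt (not_le.mpr (mul_pos h2 hgg))
    linarith
  apply hne₀
  constructor
  · apply Complex.normSq_eq_zero.mp
    have := Complex.normSq_nonneg (u₂ t₀)
    have := Complex.normSq_nonneg (u₁ t₀)
    simp only [hgdef] at hg0
    linarith
  · apply Complex.normSq_eq_zero.mp
    have := Complex.normSq_nonneg (u₂ t₀)
    have := Complex.normSq_nonneg (u₁ t₀)
    simp only [hgdef] at hg0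
    linarith
end

section
/- For every m ≥ 0 and every integer p ≥ 1, there exists a unique k in the interval [(2p−1)π/4, pπ/2) such that m·sin(2k) + k·cos(2k) = 0. -/
open Set Real

/-!
Put `t = pπ - 2k`, which runs through `(0, π/2]` as `k` runs through `[(2p-1)π/4, pπ/2)`.
Since `sin (2k) = -(-1)^p sin t` and `cos (2k) = (-1)^p cos t`, the equation becomes
`m sin t - k cos t = 0`. As `k` increases, `m sin t` does not increase, while `k cos t` strictly
increases, both of its factors being nonnegative and increasing; so the left side is strictly
decreasing in `k`, from `m ≥ 0` at the left end to `-pπ/2 < 0` at the right end, and the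
intermediate value theorem gives exactly one root.
-/

theorem StrictAntiOn.existsUnique_mem_Ico_eq {α δ : Type*} [ConditionallyCompleteLinearOrder α]
    [TopologicalSpace α] [OrderTopology α] [DenselyOrdered α] [LinearOrder δ] [TopologicalSpace δ]
    [OrderClosedTopology δ] {f : α → δ} {a b : α} {y : δ} (hf : StrictAntiOn f (Icc a b))
    (hcont : ContinuousOn f (Icc a b)) (hab : a ≤ b) (ha : y ≤ f a) (hb : f b < y) :
    ∃! x, x ∈ Ico a b ∧ f x = y := by
  obtain ⟨c, hc, hfc⟩ := intermediate_value_Icc' hab hcont ⟨hb.le, ha⟩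
  have hcb : c ≠ b := by
    rintro rfl
    exact hb.ne hfc
  refine ⟨c, ⟨⟨hc.1, hc.2.lt_of_ne hcb⟩, hfc⟩, fun x ⟨hx, hfx⟩ => ?_⟩
  exact hf.injOn (Ico_subset_Icc_self hx) hc (hfx.trans hfc.symm)

theorem strictAntiOn_mul_sin_sub_mul_cos {m L : ℝ} (hm : 0 ≤ m) (hL : π / 2 < L) :
    StrictAntiOn (fun k => m * sin (L - 2 * k) - k * cos (L - 2 * k))
      (Icc ((L - π / 2) / 2) (L / 2)) := by
  intro k hk k' hk' hkk'
  have hk_pos : 0 < k := by linarith [hk.1]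
  have hsin : sin (L - 2 * k') ≤ sin (L - 2 * k) :=
    strictMonoOn_sin.monotoneOn ⟨by linarith [pi_pos, hk'.2], by linarith [hk'.1]⟩
      ⟨by linarith [pi_pos, hk.2], by linarith [hk.1]⟩ (by linarith)
  have hcos : cos (L - 2 * k) < cos (L - 2 * k') :=
    strictAntiOn_cos ⟨by linarith [hk'.2], by linarith [pi_pos, hk'.1]⟩
      ⟨by linarith [hk.2], by linarith [pi_pos, hk.1]⟩ (by linarith)
  have hcos_nonneg : 0 ≤ cos (L - 2 * k') :=
    cos_nonneg_of_mem_Icc ⟨by linarith [pi_pos, hk'.2], by linarith [hk'.1]⟩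
  calc m * sin (L - 2 * k') - k' * cos (L - 2 * k')
      ≤ m * sin (L - 2 * k) - k * cos (L - 2 * k') := by gcongr
    _ < m * sin (L - 2 * k) - k * cos (L - 2 * k) := by gcongr

theorem mul_sin_sub_mul_cos_nat_mul_pi_sub (m k : ℝ) (n : ℕ) :
    m * sin (n * π - 2 * k) - k * cos (n * π - 2 * k) =
      -(-1) ^ n * (m * sin (2 * k) + k * cos (2 * k)) := by
  rw [sin_nat_mul_pi_sub, cos_nat_mul_pi_sub]
  ring

/-- For every `m ≥ 0` and every integer `p ≥ 1` there is a unique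
`k ∈ [(2p-1)π/4, pπ/2)` with `m·sin(2k) + k·cos(2k) = 0`. -/
theorem unique_transverse_root (m : ℝ) (hm : 0 ≤ m) (p : ℕ) (hp : 1 ≤ p) :
    ∃! k : ℝ, k ∈ Ico ((2 * (p : ℝ) - 1) * Real.pi / 4) ((p : ℝ) * Real.pi / 2) ∧
      m * Real.sin (2 * k) + k * Real.cos (2 * k) = 0 := by
  set g : ℝ → ℝ := fun k => m * sin (p * π - 2 * k) - k * cos (p * π - 2 * k)
  have hroot (k : ℝ) : m * sin (2 * k) + k * cos (2 * k) = 0 ↔ g k = 0 := by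
    simp [g, mul_sin_sub_mul_cos_nat_mul_pi_sub]
  have hL : π / 2 < p * π := by
    have : (1 : ℝ) ≤ p := by exact_mod_cast hp
    nlinarith [pi_pos]
  have ha : (2 * (p : ℝ) - 1) * π / 4 = (p * π - π / 2) / 2 := by ring
  simp_rw [hroot, ha]
  refine (strictAntiOn_mul_sin_sub_mul_cos hm hL).existsUnique_mem_Ico_eq (by fun_prop)
    (by linarith [pi_pos]) ?_ ?_
  · have : p * π - 2 * ((p * π - π / 2) / 2) = π / 2 := by ring
    simpa [this] using hm
  · have : p * π - 2 * (p * π / 2) = 0 := by ring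
    simp only [this, sin_zero, cos_zero]
    linarith [pi_pos]
end

section
/- Let m ≥ 0 and let k > 0 satisfy m·sin(2k) + k·cos(2k) = 0, and set E = √(m² + k²). Define u : [−1,1] → ℂ² by u₁(t) = k·cos(k(t+1)) + (E+m)·sin(k(t+1)) and u₂(t) = k·cos(k(t+1)) − (E−m)·sin(k(t+1)). Then u is not identically zero, u satisfies the infinite mass boundary conditions, and −u₂′(t) + m·u₁(t) = E·u₁(t) and u₁′(t) − m·u₂(t) = E·u₂(t) for all t ∈ [−1,1]. -/
open MeasureTheory Set

/-- Given `m ≥ 0` and `k > 0` with `m·sin(2k) + k·cos(2k) = 0`, set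
`E = √(m² + k²)`. The explicit function
`u₁(t) = k·cos(k(t+1)) + (E+m)·sin(k(t+1))`, `u₂(t) = k·cos(k(t+1)) − (E−m)·sin(k(t+1))`
is a nontrivial eigenfunction of the transverse Dirac operator with infinite mass
boundary conditions, for the eigenvalue `E`. -/
theorem explicit_transverse_eigenfunction
    (m k E : ℝ) (hm : 0 ≤ m) (hk : 0 < k)
    (hroot : m * Real.sin (2 * k) + k * Real.cos (2 * k) = 0)
    (hE : E = Real.sqrt (m ^ 2 + k ^ 2))
    (u₁ u₂ : ℝ → ℂ)
    (hdef₁ : ∀ t : ℝ, u₁ t =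
      ((k * Real.cos (k * (t + 1)) + (E + m) * Real.sin (k * (t + 1)) : ℝ) : ℂ))
    (hdef₂ : ∀ t : ℝ, u₂ t =
      ((k * Real.cos (k * (t + 1)) - (E - m) * Real.sin (k * (t + 1)) : ℝ) : ℂ)) :
    (∃ t ∈ Icc (-1 : ℝ) 1, ¬(u₁ t = 0 ∧ u₂ t = 0)) ∧
    u₂ 1 = -u₁ 1 ∧ u₂ (-1) = u₁ (-1) ∧
    ∀ t ∈ Icc (-1 : ℝ) 1,
      -deriv u₂ t + (m : ℂ) * u₁ t = (E : ℂ) * u₁ t ∧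
      deriv u₁ t - (m : ℂ) * u₂ t = (E : ℂ) * u₂ t := by
  have hE2 : E ^ 2 = m ^ 2 + k ^ 2 := by
    rw [hE]; exact Real.sq_sqrt (by positivity)
  have hu₁ : u₁ = fun t : ℝ =>
      ((k * Real.cos (k * (t + 1)) + (E + m) * Real.sin (k * (t + 1)) : ℝ) : ℂ) :=
    funext hdef₁
  have hu₂ : u₂ = fun t : ℝ =>
      ((k * Real.cos (k * (t + 1)) - (E - m) * Real.sin (k * (t + 1)) : ℝ) : ℂ) :=
    funext hdef₂
  subst hu₁ hu₂
  have hroot' : m * Real.sin (k * (1 + 1)) + k * Real.cos (k * (1 + 1)) = 0 := by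
    rw [show k * (1 + 1) = 2 * k by ring]; exact hroot
  refine ⟨⟨-1, by norm_num, ?_⟩, ?_, ?_, ?_⟩
  · rintro ⟨h1, -⟩
    simp only [Complex.ofReal_eq_zero] at h1
    norm_num at h1
    nlinarith [h1]
  · rw [← Complex.ofReal_neg, Complex.ofReal_inj]
    linear_combination 2 * hroot'
  · rw [Complex.ofReal_inj]
    norm_num
  · intro t ht
    have hin : HasDerivAt (fun t : ℝ => k * (t + 1)) k t := by
      simpa using ((hasDerivAt_id t).add_const 1).const_mul k
    have hcos : HasDerivAt (fun t : ℝ => Real.cos (k * (t + 1)))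
        (-Real.sin (k * (t + 1)) * k) t := (Real.hasDerivAt_cos _).comp t hin
    have hsin : HasDerivAt (fun t : ℝ => Real.sin (k * (t + 1)))
        (Real.cos (k * (t + 1)) * k) t := (Real.hasDerivAt_sin _).comp t hin
    have hd₁ : HasDerivAt (fun t : ℝ =>
        ((k * Real.cos (k * (t + 1)) + (E + m) * Real.sin (k * (t + 1)) : ℝ) : ℂ))
        ((k * (-Real.sin (k * (t + 1)) * k) + (E + m) * (Real.cos (k * (t + 1)) * k) : ℝ) : ℂ) t :=
      ((hcos.const_mul k).add (hsin.const_mul (E + m))).ofReal_comp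
    have hd₂ : HasDerivAt (fun t : ℝ =>
        ((k * Real.cos (k * (t + 1)) - (E - m) * Real.sin (k * (t + 1)) : ℝ) : ℂ))
        ((k * (-Real.sin (k * (t + 1)) * k) - (E - m) * (Real.cos (k * (t + 1)) * k) : ℝ) : ℂ) t :=
      ((hcos.const_mul k).sub (hsin.const_mul (E - m))).ofReal_comp
    rw [hd₁.deriv, hd₂.deriv]
    constructor
    · rw [← Complex.ofReal_neg, ← Complex.ofReal_mul, ← Complex.ofReal_add,
        ← Complex.ofReal_mul, Complex.ofReal_inj]
      linear_combination (-Real.sin (k * (t + 1))) * hE2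
    · rw [← Complex.ofReal_mul, ← Complex.ofReal_sub, ← Complex.ofReal_mul,
        Complex.ofReal_inj]
      linear_combination Real.sin (k * (t + 1)) * hE2
end

section
/- Let m ≥ 0, E ∈ ℝ, and let u = (u₁,u₂) : [−1,1] → ℂ² be continuously differentiable, not identically zero, satisfy the infinite mass boundary conditions, and satisfy −u₂′(t) + m·u₁(t) = E·u₁(t) and u₁′(t) − m·u₂(t) = E·u₂(t) for all t ∈ [−1,1]. Then there exists k > 0 such that m·sin(2k) + k·cos(2k) = 0 and E² = m² + k². -/
open Set

/-!
The eigenvalue equation is the linear system `u₁' = (E + m) u₂`, `u₂' = (m - E) u₁`, so by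
Grönwall a solution vanishing at `-1` vanishes identically.

If `|E| ≤ m`, the function `⟪u₁, u₂⟫_ℝ = Re (conj u₁ · u₂)` is nondecreasing, its derivative being
`(m - E) |u₁|² + (E + m) |u₂|²`, while the boundary conditions make it equal to `|u₁(-1)|² ≥ 0`
at `-1` and to `-|u₁(1)|² ≤ 0` at `1`. Hence `u(-1) = 0` and `u` is trivial.

Otherwise let `k = √(E² - m²)`. The explicit solution
`w(t) = (k cos k(t+1) + (E + m) sin k(t+1), k cos k(t+1) + (m - E) sin k(t+1))` satisfies
`w(-1) = (k, k)`, which by the boundary condition at `-1` is proportional to `u(-1)`; so `k u` is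
a nonzero multiple of `w`, and the boundary condition at `1` reads
`w₁(1) + w₂(1) = 2 (k cos 2k + m sin 2k) = 0`.
-/

theorem eqOn_zero_of_hasDerivWithinAt_clm {F : Type*} [NormedAddCommGroup F] [NormedSpace ℝ F]
    (L : F →L[ℝ] F) {f : ℝ → F} {a b : ℝ}
    (hf : ∀ t ∈ Icc a b, HasDerivWithinAt f (L (f t)) (Icc a b) t) (ha : f a = 0) :
    EqOn f 0 (Icc a b) :=
  eq_zero_of_abs_deriv_le_mul_abs_self_of_eq_zero_right
    (fun t ht => (hf t ht).continuousWithinAt)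
    (fun t ht => (hf t (Ico_subset_Icc_self ht)).mono_of_mem_nhdsWithin (Icc_mem_nhdsGE_of_mem ht))
    ha (fun t _ => L.le_opNorm (f t))

/-- `u' = diracField m E u` is the eigenvalue equation `T(m) u = E u` solved for `u'`. -/
noncomputable def diracField (m E : ℝ) : ℂ × ℂ →L[ℂ] ℂ × ℂ :=
  ((E + m) • ContinuousLinearMap.snd ℂ ℂ ℂ).prod ((m - E) • ContinuousLinearMap.fst ℂ ℂ ℂ)

@[simp]
theorem diracField_apply (m E : ℝ) (x : ℂ × ℂ) :
    diracField m E x = ((E + m) • x.2, (m - E) • x.1) :=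
  rfl

def IsDiracSolution (m E : ℝ) (u : ℝ → ℂ × ℂ) : Prop :=
  ∀ t ∈ Icc (-1 : ℝ) 1, HasDerivWithinAt u (diracField m E (u t)) (Icc (-1) 1) t

def InfiniteMassBC (u : ℝ → ℂ × ℂ) : Prop :=
  (u 1).2 = -(u 1).1 ∧ (u (-1)).2 = (u (-1)).1

noncomputable def diracMode (m E k t : ℝ) : ℂ × ℂ :=
  (↑(k * Real.cos (k * (t + 1)) + (E + m) * Real.sin (k * (t + 1))),
    ↑(k * Real.cos (k * (t + 1)) + (m - E) * Real.sin (k * (t + 1))))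

theorem hasDerivAt_mul_cos_add_mul_sin (k c t : ℝ) :
    HasDerivAt (fun t => k * Real.cos (k * (t + 1)) + c * Real.sin (k * (t + 1)))
      (k * (c * Real.cos (k * (t + 1)) - k * Real.sin (k * (t + 1)))) t := by
  have hlin : HasDerivAt (fun t => k * (t + 1)) k t := by
    simpa using ((hasDerivAt_id t).add_const 1).const_mul k
  exact ((hlin.cos.const_mul k).add (hlin.sin.const_mul c)).congr_deriv (by ring)

theorem isDiracSolution_diracMode {m E k : ℝ} (hk : k ^ 2 = E ^ 2 - m ^ 2) :
    IsDiracSolution m E (diracMode m E k) := fun t _ => by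
  refine (((hasDerivAt_mul_cos_add_mul_sin k (E + m) t).ofReal_comp.prodMk
    (hasDerivAt_mul_cos_add_mul_sin k (m - E) t).ofReal_comp).hasDerivWithinAt).congr_deriv ?_
  simp only [diracMode, diracField_apply, Complex.real_smul, ← Complex.ofReal_mul, Prod.mk.injEq,
    Complex.ofReal_inj]
  constructor <;> linear_combination -Real.sin (k * (t + 1)) * hk

namespace IsDiracSolution

variable {m E : ℝ} {u v : ℝ → ℂ × ℂ}

theorem eqOn_zero (hu : IsDiracSolution m E u) (h : u (-1) = 0) : EqOn u 0 (Icc (-1) 1) :=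
  eqOn_zero_of_hasDerivWithinAt_clm ((diracField m E).restrictScalars ℝ) hu h

theorem smul_sub_smul (hu : IsDiracSolution m E u) (hv : IsDiracSolution m E v) (a b : ℂ) :
    IsDiracSolution m E (a • u - b • v) := fun t ht => by
  simpa only [Pi.sub_apply, Pi.smul_apply, map_sub, map_smul] using
    ((hu t ht).const_smul a).sub ((hv t ht).const_smul b)

theorem eq_zero_of_abs_le (hu : IsDiracSolution m E u) (hbc : InfiniteMassBC u) (hE : |E| ≤ m) :
    u (-1) = 0 := by
  obtain ⟨hEm, hmE⟩ : 0 ≤ E + m ∧ 0 ≤ m - E := by constructor <;> linarith [abs_le.1 hE]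
  set g : ℝ → ℝ := fun t => inner ℝ (u t).1 (u t).2
  set g' : ℝ → ℝ := fun t => (m - E) * ‖(u t).1‖ ^ 2 + (E + m) * ‖(u t).2‖ ^ 2
  have hg : ∀ t ∈ Icc (-1 : ℝ) 1, HasDerivWithinAt g (g' t) (Icc (-1) 1) t := fun t ht => by
    refine ((hasFDerivAt_fst.comp_hasDerivWithinAt t (hu t ht)).inner ℝ
      (hasFDerivAt_snd.comp_hasDerivWithinAt t (hu t ht))).congr_deriv ?_
    simp only [g', Function.comp_apply, ContinuousLinearMap.coe_snd', ContinuousLinearMap.coe_fst',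
      diracField_apply, real_inner_smul_left, real_inner_smul_right, real_inner_self_eq_norm_sq]
  have hmono : MonotoneOn g (Icc (-1) 1) := by
    refine monotoneOn_of_hasDerivWithinAt_nonneg (f' := g') (convex_Icc _ _)
      (fun t ht => (hg t ht).continuousWithinAt) (fun t ht => ?_) (fun t _ => by positivity)
    rw [interior_Icc] at ht ⊢
    exact (hg t (Ioo_subset_Icc_self ht)).mono Ioo_subset_Icc_self
  have hle := hmono (left_mem_Icc.2 (by norm_num)) (right_mem_Icc.2 (by norm_num)) (by norm_num)
  simp only [g, hbc.1, hbc.2, inner_neg_right, real_inner_self_eq_norm_sq] at hle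
  have h₁ : (u (-1)).1 = 0 := by
    rw [← norm_eq_zero]
    nlinarith [norm_nonneg (u (-1)).1, sq_nonneg ‖(u 1).1‖]
  exact Prod.ext h₁ (hbc.2.trans h₁)

theorem dispersion_relation (hu : IsDiracSolution m E u) (hbc : InfiniteMassBC u)
    (hu0 : u (-1) ≠ 0) {k : ℝ} (hk : k ^ 2 = E ^ 2 - m ^ 2) :
    m * Real.sin (2 * k) + k * Real.cos (2 * k) = 0 := by
  set c := (u (-1)).1
  have hc : c ≠ 0 := fun h => hu0 (Prod.ext h (hbc.2.trans h))
  have hd := (hu.smul_sub_smul (isDiracSolution_diracMode hk) (k : ℂ) c).eqOn_zero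
    (Prod.ext (by simp [diracMode, c, mul_comm]) (by simp [diracMode, hbc.2, c, mul_comm]))
    (right_mem_Icc.2 (by norm_num))
  have h₁ := congrArg Prod.fst hd
  have h₂ := congrArg Prod.snd hd
  simp only [Pi.sub_apply, Pi.smul_apply, Prod.fst_sub, Prod.snd_sub, Prod.smul_fst,
    Prod.smul_snd, smul_eq_mul, Pi.zero_apply, Prod.fst_zero, Prod.snd_zero, diracMode,
    hbc.1, one_add_one_eq_two, mul_comm k 2] at h₁ h₂
  have hsum : c * ↑(2 * (m * Real.sin (2 * k) + k * Real.cos (2 * k))) = 0 := by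
    rw [show 2 * (m * Real.sin (2 * k) + k * Real.cos (2 * k)) =
      (k * Real.cos (2 * k) + (E + m) * Real.sin (2 * k)) +
        (k * Real.cos (2 * k) + (m - E) * Real.sin (2 * k)) by ring, Complex.ofReal_add]
    linear_combination -h₁ - h₂
  have := Complex.ofReal_eq_zero.1 ((mul_eq_zero.1 hsum).resolve_left hc)
  linarith

end IsDiracSolution

theorem transverse_eigenvalue_dispersion_general
    (m E : ℝ) (hm : 0 ≤ m) (u₁ u₂ u₁' u₂' : ℝ → ℂ)
    (hu₁ : ∀ t ∈ Icc (-1 : ℝ) 1, HasDerivWithinAt u₁ (u₁' t) (Icc (-1 : ℝ) 1) t)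
    (hu₂ : ∀ t ∈ Icc (-1 : ℝ) 1, HasDerivWithinAt u₂ (u₂' t) (Icc (-1 : ℝ) 1) t)
    (hne : ∃ t ∈ Icc (-1 : ℝ) 1, ¬(u₁ t = 0 ∧ u₂ t = 0))
    (hbc1 : u₂ 1 = -u₁ 1) (hbc2 : u₂ (-1) = u₁ (-1))
    (heig : ∀ t ∈ Icc (-1 : ℝ) 1,
      -u₂' t + (m : ℂ) * u₁ t = (E : ℂ) * u₁ t ∧
      u₁' t - (m : ℂ) * u₂ t = (E : ℂ) * u₂ t) :
    ∃ k : ℝ, 0 < k ∧ m * Real.sin (2 * k) + k * Real.cos (2 * k) = 0 ∧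
      E ^ 2 = m ^ 2 + k ^ 2 := by
  set u : ℝ → ℂ × ℂ := fun t => (u₁ t, u₂ t)
  have hu : IsDiracSolution m E u := fun t ht => by
    refine ((hu₁ t ht).prodMk (hu₂ t ht)).congr_deriv (Prod.ext ?_ ?_) <;>
      simp only [u, diracField_apply, Complex.real_smul, Complex.ofReal_add, Complex.ofReal_sub]
    · linear_combination (heig t ht).2
    · linear_combination -(heig t ht).1
  have hbc : InfiniteMassBC u := ⟨hbc1, hbc2⟩
  have hu0 : u (-1) ≠ 0 := fun h => by
    obtain ⟨t, ht, hnz⟩ := hne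
    exact hnz (Prod.ext_iff.1 (hu.eqOn_zero h ht))
  have hmE : m ^ 2 < E ^ 2 := by
    by_contra! h
    exact hu0 (hu.eq_zero_of_abs_le hbc (abs_le_of_sq_le_sq h hm))
  have hk := Real.sq_sqrt (sub_nonneg.2 hmE.le)
  exact ⟨_, Real.sqrt_pos.2 (sub_pos.2 hmE), hu.dispersion_relation hbc hu0 hk, by linarith⟩

/-- Any eigenvalue `E` of the transverse Dirac operator `T(m)` with
infinite mass boundary conditions (with a nontrivial continuously differentiable
eigenfunction) satisfies `E² = m² + k²` for some `k > 0` with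
`m·sin(2k) + k·cos(2k) = 0`. -/
theorem transverse_eigenvalue_dispersion
    (m E : ℝ) (hm : 0 ≤ m) (u₁ u₂ u₁' u₂' : ℝ → ℂ)
    (hu₁ : ∀ t ∈ Icc (-1 : ℝ) 1, HasDerivWithinAt u₁ (u₁' t) (Icc (-1 : ℝ) 1) t)
    (hu₂ : ∀ t ∈ Icc (-1 : ℝ) 1, HasDerivWithinAt u₂ (u₂' t) (Icc (-1 : ℝ) 1) t)
    (hc₁ : ContinuousOn u₁' (Icc (-1 : ℝ) 1))
    (hc₂ : ContinuousOn u₂' (Icc (-1 : ℝ) 1))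
    (hne : ∃ t ∈ Icc (-1 : ℝ) 1, ¬(u₁ t = 0 ∧ u₂ t = 0))
    (hbc1 : u₂ 1 = -u₁ 1) (hbc2 : u₂ (-1) = u₁ (-1))
    (heig : ∀ t ∈ Icc (-1 : ℝ) 1,
      -u₂' t + (m : ℂ) * u₁ t = (E : ℂ) * u₁ t ∧
      u₁' t - (m : ℂ) * u₂ t = (E : ℂ) * u₂ t) :
    ∃ k : ℝ, 0 < k ∧ m * Real.sin (2 * k) + k * Real.cos (2 * k) = 0 ∧
      E ^ 2 = m ^ 2 + k ^ 2 :=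
  transverse_eigenvalue_dispersion_general m E hm u₁ u₂ u₁' u₂' hu₁ hu₂ hne hbc1 hbc2 heig
end

section
/- Let m ≥ 0, E > 0, and let u = (u₁,u₂) : [−1,1] → ℂ² be continuously differentiable, not identically zero, satisfy the infinite mass boundary conditions, and satisfy −u₂′(t) + m·u₁(t) = E·u₁(t) and u₁′(t) − m·u₂(t) = E·u₂(t) for all t ∈ [−1,1]. Then E² > m², and setting k = √(E² − m²) there holds m·sin(2k) + k·cos(2k) = 0 and there exists a complex constant c such that u₁(t) = c·(k·cos(k(t+1)) + (E+m)·sin(k(t+1))) and u₂(t) = c·(k·cos(k(t+1)) − (E−m)·sin(k(t+1))) for all t ∈ [−1,1]. -/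
/-!
The eigenvalue equations say `u₁' = (E + m) u₂`, `u₂' = (m - E) u₁`, a linear system whose
solutions are determined by their value at `-1`. If `E ≤ m` both coefficients are nonnegative, so
`Re (conj u₁ * u₂)` is nondecreasing; the boundary conditions make it `|u₁(-1)|²` at `-1` and
`-|u₁(1)|²` at `1`, which forces `u(-1) = 0` and hence `u = 0`. If `E > m`, the trigonometric pair
in the statement solves the system and takes the value `(k, k)` at `-1`, so `u` is a multiple of
it, and the boundary condition at `1` becomes `m sin 2k + k cos 2k = 0`.
-/

open Set

/-- The eigenvalue equation `T(m) u = E u` is this system with `α = E + m`, `β = m - E`. -/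
def IsCoupledSolution (α β : ℂ) (f₁ f₂ : ℝ → ℂ) (s : Set ℝ) : Prop :=
  ∀ t ∈ s, HasDerivWithinAt f₁ (α * f₂ t) s t ∧ HasDerivWithinAt f₂ (β * f₁ t) s t

namespace IsCoupledSolution

variable {α β : ℂ} {f₁ f₂ g₁ g₂ : ℝ → ℂ} {s : Set ℝ} {a b : ℝ}

theorem zero : IsCoupledSolution α β 0 0 s := fun t _ => by
  simp only [Pi.zero_apply, mul_zero]
  exact ⟨hasDerivWithinAt_const t s 0, hasDerivWithinAt_const t s 0⟩

theorem const_mul (h : IsCoupledSolution α β f₁ f₂ s) (c : ℂ) :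
    IsCoupledSolution α β (fun t => c * f₁ t) (fun t => c * f₂ t) s := fun t ht =>
  ⟨((h t ht).1.const_mul c).congr_deriv (by ring), ((h t ht).2.const_mul c).congr_deriv (by ring)⟩

theorem eqOn (hf : IsCoupledSolution α β f₁ f₂ (Icc a b))
    (hg : IsCoupledSolution α β g₁ g₂ (Icc a b)) (h₁ : f₁ a = g₁ a) (h₂ : f₂ a = g₂ a) :
    ∀ t ∈ Icc a b, f₁ t = g₁ t ∧ f₂ t = g₂ t := by
  let L : ℂ × ℂ →L[ℂ] ℂ × ℂ :=
    (α • ContinuousLinearMap.snd ℂ ℂ ℂ).prod (β • ContinuousLinearMap.fst ℂ ℂ ℂ)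
  have hcurve : ∀ {φ₁ φ₂ : ℝ → ℂ}, IsCoupledSolution α β φ₁ φ₂ (Icc a b) →
      ∀ t ∈ Icc a b, HasDerivWithinAt (fun t => (φ₁ t, φ₂ t)) (L (φ₁ t, φ₂ t)) (Icc a b) t :=
    fun hφ t ht => (hφ t ht).1.prodMk (hφ t ht).2
  have heq := ODE_solution_unique (v := fun _ => L) (K := ‖L‖₊) (fun _ => L.lipschitz)
    (fun t ht => (hcurve hf t ht).continuousWithinAt)
    (fun t ht => (hcurve hf t (Ico_subset_Icc_self ht)).mono_of_mem_nhdsWithin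
      (Icc_mem_nhdsGE_of_mem ht))
    (fun t ht => (hcurve hg t ht).continuousWithinAt)
    (fun t ht => (hcurve hg t (Ico_subset_Icc_self ht)).mono_of_mem_nhdsWithin
      (Icc_mem_nhdsGE_of_mem ht))
    (Prod.ext h₁ h₂)
  exact fun t ht => Prod.ext_iff.1 (heq ht)

theorem eq_zero_of_left_eq_zero (h : IsCoupledSolution α β f₁ f₂ (Icc a b)) (h₁ : f₁ a = 0)
    (h₂ : f₂ a = 0) : ∀ t ∈ Icc a b, f₁ t = 0 ∧ f₂ t = 0 :=
  h.eqOn zero h₁ h₂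

theorem hasDerivWithinAt_re_star_mul {α β : ℝ} (h : IsCoupledSolution α β f₁ f₂ s) {t : ℝ}
    (ht : t ∈ s) :
    HasDerivWithinAt (fun t => (star (f₁ t) * f₂ t).re)
      (α * Complex.normSq (f₂ t) + β * Complex.normSq (f₁ t)) s t := by
  refine (Complex.reCLM.hasFDerivAt.comp_hasDerivWithinAt t
    ((h t ht).1.star.mul (h t ht).2)).congr_deriv ?_
  simp only [Complex.reCLM_apply, Complex.add_re, Complex.mul_re, Complex.star_def,
    Complex.conj_re, Complex.conj_im, Complex.normSq_apply, Complex.ofReal_re,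
    Complex.ofReal_im, Complex.mul_im, map_mul, Complex.conj_ofReal]
  ring

theorem monotoneOn_re_star_mul {α β : ℝ} (hα : 0 ≤ α) (hβ : 0 ≤ β)
    (h : IsCoupledSolution α β f₁ f₂ s) (hs : Convex ℝ s) :
    MonotoneOn (fun t => (star (f₁ t) * f₂ t).re) s :=
  monotoneOn_of_hasDerivWithinAt_nonneg hs
    (fun _ ht => (h.hasDerivWithinAt_re_star_mul ht).continuousWithinAt)
    (fun _ ht => (h.hasDerivWithinAt_re_star_mul (interior_subset ht)).mono interior_subset)
    (fun _ _ => add_nonneg (mul_nonneg hα (Complex.normSq_nonneg _))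
      (mul_nonneg hβ (Complex.normSq_nonneg _)))

theorem left_eq_zero_of_nonneg {α β : ℝ} (hα : 0 ≤ α) (hβ : 0 ≤ β)
    (h : IsCoupledSolution α β f₁ f₂ (Icc a b)) (hab : a ≤ b) (ha : f₂ a = f₁ a)
    (hb : f₂ b = -f₁ b) : f₁ a = 0 := by
  have hle := h.monotoneOn_re_star_mul hα hβ (convex_Icc a b) (left_mem_Icc.2 hab)
    (right_mem_Icc.2 hab) hab
  simp only [ha, hb, mul_neg, Complex.neg_re, Complex.star_def, Complex.conj_mul'] at hle
  norm_cast at hle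
  have := sq_nonneg ‖f₁ b‖
  exact norm_eq_zero.1 (pow_eq_zero_iff two_ne_zero |>.1 (by linarith [sq_nonneg ‖f₁ a‖]))

end IsCoupledSolution

theorem isCoupledSolution_cos_sin {p q k : ℝ} (hk : k ^ 2 = p * q) (t₀ : ℝ) (s : Set ℝ) :
    IsCoupledSolution p (-q : ℝ)
      (fun t => (k * Real.cos (k * (t - t₀)) + p * Real.sin (k * (t - t₀)) : ℝ))
      (fun t => (k * Real.cos (k * (t - t₀)) - q * Real.sin (k * (t - t₀)) : ℝ)) s := by
  intro t _
  have hθ : HasDerivAt (fun t => k * (t - t₀)) k t := by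
    simpa using ((hasDerivAt_id t).sub_const t₀).const_mul k
  have hcos := ((Real.hasDerivAt_cos _).comp t hθ).const_mul k
  have hsin := (Real.hasDerivAt_sin _).comp t hθ
  have hV₁ := (hcos.add (hsin.const_mul p)).congr_deriv (show _ =
      p * (k * Real.cos (k * (t - t₀)) - q * Real.sin (k * (t - t₀))) by
    linear_combination -Real.sin (k * (t - t₀)) * hk)
  have hV₂ := (hcos.sub (hsin.const_mul q)).congr_deriv (show _ =
      -q * (k * Real.cos (k * (t - t₀)) + p * Real.sin (k * (t - t₀))) by
    linear_combination -Real.sin (k * (t - t₀)) * hk)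
  exact ⟨(Complex.ofReal_mul _ _ ▸ hV₁.ofReal_comp).hasDerivWithinAt,
    (Complex.ofReal_mul _ _ ▸ hV₂.ofReal_comp).hasDerivWithinAt⟩

theorem transverse_eigenfunction_classification_general
    (m E : ℝ) (hm : 0 ≤ m) (hE : 0 < E) (u₁ u₂ u₁' u₂' : ℝ → ℂ)
    (hu₁ : ∀ t ∈ Icc (-1 : ℝ) 1, HasDerivWithinAt u₁ (u₁' t) (Icc (-1 : ℝ) 1) t)
    (hu₂ : ∀ t ∈ Icc (-1 : ℝ) 1, HasDerivWithinAt u₂ (u₂' t) (Icc (-1 : ℝ) 1) t)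
    (hne : ∃ t ∈ Icc (-1 : ℝ) 1, ¬(u₁ t = 0 ∧ u₂ t = 0))
    (hbc1 : u₂ 1 = -u₁ 1) (hbc2 : u₂ (-1) = u₁ (-1))
    (heig : ∀ t ∈ Icc (-1 : ℝ) 1,
      -u₂' t + (m : ℂ) * u₁ t = (E : ℂ) * u₁ t ∧
      u₁' t - (m : ℂ) * u₂ t = (E : ℂ) * u₂ t) :
    m ^ 2 < E ^ 2 ∧
    m * Real.sin (2 * Real.sqrt (E ^ 2 - m ^ 2))
      + Real.sqrt (E ^ 2 - m ^ 2) * Real.cos (2 * Real.sqrt (E ^ 2 - m ^ 2)) = 0 ∧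
    ∃ c : ℂ, ∀ t ∈ Icc (-1 : ℝ) 1,
      u₁ t = c * ((Real.sqrt (E ^ 2 - m ^ 2) * Real.cos (Real.sqrt (E ^ 2 - m ^ 2) * (t + 1))
        + (E + m) * Real.sin (Real.sqrt (E ^ 2 - m ^ 2) * (t + 1)) : ℝ) : ℂ) ∧
      u₂ t = c * ((Real.sqrt (E ^ 2 - m ^ 2) * Real.cos (Real.sqrt (E ^ 2 - m ^ 2) * (t + 1))
        - (E - m) * Real.sin (Real.sqrt (E ^ 2 - m ^ 2) * (t + 1)) : ℝ) : ℂ) := by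
  have hu : IsCoupledSolution (E + m : ℝ) (-(E - m) : ℝ) u₁ u₂ (Icc (-1) 1) := fun t ht =>
    ⟨(hu₁ t ht).congr_deriv (by push_cast; linear_combination (heig t ht).2),
      (hu₂ t ht).congr_deriv (by push_cast; linear_combination -(heig t ht).1)⟩
  have hab : (-1 : ℝ) ≤ 1 := by norm_num
  have hu₁_ne : u₁ (-1) ≠ 0 := fun h₀ => by
    obtain ⟨t, ht, hnt⟩ := hne
    exact hnt (hu.eq_zero_of_left_eq_zero h₀ (hbc2.trans h₀) t ht)
  have hmE : m ^ 2 < E ^ 2 := by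
    by_contra! hle
    have hEm : E ≤ m := (pow_le_pow_iff_left₀ hE.le hm two_ne_zero).1 hle
    exact hu₁_ne (hu.left_eq_zero_of_nonneg (by linarith) (by linarith) hab hbc2 hbc1)
  set k := Real.sqrt (E ^ 2 - m ^ 2)
  have hk : k ^ 2 = (E + m) * (E - m) := by rw [Real.sq_sqrt (by linarith)]; ring
  have hk₀ : (k : ℂ) ≠ 0 := Complex.ofReal_ne_zero.2 (Real.sqrt_pos.2 (by linarith)).ne'
  set c := u₁ (-1) / k
  have hu_eq := hu.eqOn ((isCoupledSolution_cos_sin hk (-1) _).const_mul c)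
    (by simp [c, hk₀]) (by simp [c, hk₀, hbc2])
  simp only [sub_neg_eq_add] at hu_eq
  refine ⟨hmE, ?_, c, hu_eq⟩
  obtain ⟨h₁, h₂⟩ := hu_eq 1 (right_mem_Icc.2 hab)
  have hsec : c * ((2 * (m * Real.sin (2 * k) + k * Real.cos (2 * k)) : ℝ) : ℂ) = 0 := by
    rw [hbc1, h₁] at h₂
    push_cast at h₂ ⊢
    ring_nf at h₂ ⊢
    linear_combination -h₂
  rw [mul_eq_zero, or_iff_right (div_ne_zero hu₁_ne hk₀), Complex.ofReal_eq_zero, mul_eq_zero,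
    or_iff_right two_ne_zero] at hsec
  exact hsec

/-- If `E > 0` is an eigenvalue of the transverse Dirac operator `T(m)`
with infinite mass boundary conditions, with nontrivial continuously differentiable
eigenfunction `u`, then `E² > m²`, the number `k = √(E² − m²)` satisfies
`m·sin(2k) + k·cos(2k) = 0`, and `u` is a multiple of the explicit eigenfunction. -/
theorem transverse_eigenfunction_classification
    (m E : ℝ) (hm : 0 ≤ m) (hE : 0 < E) (u₁ u₂ u₁' u₂' : ℝ → ℂ)
    (hu₁ : ∀ t ∈ Icc (-1 : ℝ) 1, HasDerivWithinAt u₁ (u₁' t) (Icc (-1 : ℝ) 1) t)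
    (hu₂ : ∀ t ∈ Icc (-1 : ℝ) 1, HasDerivWithinAt u₂ (u₂' t) (Icc (-1 : ℝ) 1) t)
    (hc₁ : ContinuousOn u₁' (Icc (-1 : ℝ) 1))
    (hc₂ : ContinuousOn u₂' (Icc (-1 : ℝ) 1))
    (hne : ∃ t ∈ Icc (-1 : ℝ) 1, ¬(u₁ t = 0 ∧ u₂ t = 0))
    (hbc1 : u₂ 1 = -u₁ 1) (hbc2 : u₂ (-1) = u₁ (-1))
    (heig : ∀ t ∈ Icc (-1 : ℝ) 1,
      -u₂' t + (m : ℂ) * u₁ t = (E : ℂ) * u₁ t ∧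
      u₁' t - (m : ℂ) * u₂ t = (E : ℂ) * u₂ t) :
    m ^ 2 < E ^ 2 ∧
    m * Real.sin (2 * Real.sqrt (E ^ 2 - m ^ 2))
      + Real.sqrt (E ^ 2 - m ^ 2) * Real.cos (2 * Real.sqrt (E ^ 2 - m ^ 2)) = 0 ∧
    ∃ c : ℂ, ∀ t ∈ Icc (-1 : ℝ) 1,
      u₁ t = c * ((Real.sqrt (E ^ 2 - m ^ 2) * Real.cos (Real.sqrt (E ^ 2 - m ^ 2) * (t + 1))
        + (E + m) * Real.sin (Real.sqrt (E ^ 2 - m ^ 2) * (t + 1)) : ℝ) : ℂ) ∧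
      u₂ t = c * ((Real.sqrt (E ^ 2 - m ^ 2) * Real.cos (Real.sqrt (E ^ 2 - m ^ 2) * (t + 1))
        - (E - m) * Real.sin (Real.sqrt (E ^ 2 - m ^ 2) * (t + 1)) : ℝ) : ℂ) :=
  transverse_eigenfunction_classification_general m E hm hE u₁ u₂ u₁' u₂' hu₁ hu₂ hne hbc1 hbc2 heig
end

section
/- Let k : [0,∞) → ℝ be any function such that for every m ≥ 0, k(m) ∈ [π/4, π/2) and m·sin(2k(m)) + k(m)·cos(2k(m)) = 0. Then there exist constants C > 0 and m₀ > 0 such that for all m ∈ [0, m₀] there holds |k(m) − π/4 − (2/π)·m + (16/π³)·m²| ≤ C·m³. -/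
/-!
With `k = π/4 + ε` the equation reads `m = (π/4 + ε) tan 2ε`. Since `x ≤ tan x ≤ x + x³` on
`[0, 1]`, this gives `m = (π/4 + ε)(2ε + r)` with `0 ≤ r ≤ 8ε³`, so `ε ≤ m` and
`πε - 2m = -4ε² + O(m³) = O(m²)`. Then
`π³ε - 2π²m + 16m² = -4(πε - 2m)(πε + 2m) + O(m³) = O(m³)`.
-/

open Set Real

lemma Real.tan_le_self_add_pow_three {x : ℝ} (hx₀ : 0 ≤ x) (hx₁ : x ≤ 1) :
    tan x ≤ x + x ^ 3 := by
  have hcos : 0 < cos x := cos_pos_of_mem_Ioo ⟨by linarith [pi_pos], by linarith [pi_gt_three]⟩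
  rw [tan_eq_sin_div_cos, div_le_iff₀ hcos]
  calc sin x ≤ x := sin_le hx₀
    _ ≤ (x + x ^ 3) * (1 - x ^ 2 / 2) := by
      nlinarith [mul_nonneg (pow_nonneg hx₀ 3) (by nlinarith : 0 ≤ 1 - x ^ 2)]
    _ ≤ (x + x ^ 3) * cos x := by gcongr; exact one_sub_sq_div_two_le_cos

lemma eq_mul_tan_of_sin_add_cos_eq_zero {m ε : ℝ} (hε : ε ∈ Ioo (-(π / 4)) (π / 4))
    (h : m * sin (2 * (π / 4 + ε)) + (π / 4 + ε) * cos (2 * (π / 4 + ε)) = 0) :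
    m = (π / 4 + ε) * tan (2 * ε) := by
  have hcos : 0 < cos (2 * ε) := cos_pos_of_mem_Ioo ⟨by linarith [hε.1], by linarith [hε.2]⟩
  rw [show 2 * (π / 4 + ε) = 2 * ε + π / 2 by ring, sin_add_pi_div_two,
    cos_add_pi_div_two] at h
  rw [tan_eq_sin_div_cos, mul_div_assoc', eq_div_iff hcos.ne']
  linarith

lemma le_of_eq_mul_of_two_mul_le {m ε t : ℝ} (hε : 0 ≤ ε) (ht : 2 * ε ≤ t)
    (hm : m = (π / 4 + ε) * t) : ε ≤ m := by
  nlinarith [pi_gt_three]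

section Expansion

variable {m ε t : ℝ}

lemma abs_pi_cube_mul_sub_le (hε : 0 ≤ ε) (ht_lower : 2 * ε ≤ t)
    (ht_upper : t ≤ 2 * ε + (2 * ε) ^ 3) (hm : m = (π / 4 + ε) * t) (hm_le : m ≤ 1 / 4) :
    |π ^ 3 * ε - 2 * π ^ 2 * m + 16 * m ^ 2| ≤ 320 * m ^ 3 := by
  have hπ₃ := pi_gt_three
  have hπ₄ := pi_lt_four
  have hεm := le_of_eq_mul_of_two_mul_le hε ht_lower hm
  have hm₀ : 0 ≤ m := hε.trans hεm
  obtain ⟨r, rfl⟩ : ∃ r, t = 2 * ε + r := ⟨t - 2 * ε, by ring⟩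
  have hr₀ : 0 ≤ r := by linarith
  have hr : r ≤ 8 * m ^ 3 := by nlinarith [pow_le_pow_left₀ hε hεm 3]
  have hlin : π * ε - 2 * m = -(4 * ε ^ 2) - (π / 2 + 2 * ε) * r := by rw [hm]; ring
  have hlin_le : π * ε - 2 * m ≤ 0 := by nlinarith
  have hlin_ge : -(9 * m ^ 2) ≤ π * ε - 2 * m := by nlinarith
  have hprod : -(36 * m ^ 3) ≤ (π * ε - 2 * m) * (π * ε + 2 * m) := by
    have := mul_le_mul (neg_le.mp hlin_ge) (by linarith : π * ε + 2 * m ≤ 4 * m)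
      (by positivity) (by positivity)
    linarith
  have hrem₀ : 0 ≤ (π / 2 + 2 * ε) * r := by positivity
  have hrem : π ^ 2 * ((π / 2 + 2 * ε) * r) ≤ 16 * (5 / 2 * (8 * m ^ 3)) := by
    gcongr
    · nlinarith
    · linarith
  have hquad : π ^ 3 * ε - 2 * π ^ 2 * m + 16 * m ^ 2
      = -4 * ((π * ε - 2 * m) * (π * ε + 2 * m)) - π ^ 2 * ((π / 2 + 2 * ε) * r) := by
    rw [hm]; ring
  rw [hquad, abs_le]
  constructor
  · nlinarith [mul_nonpos_of_nonpos_of_nonneg hlin_le (by positivity : 0 ≤ π * ε + 2 * m)]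
  · nlinarith [sq_nonneg π]

lemma abs_sub_expansion_le (hε : 0 ≤ ε) (ht_lower : 2 * ε ≤ t)
    (ht_upper : t ≤ 2 * ε + (2 * ε) ^ 3) (hm : m = (π / 4 + ε) * t) (hm_le : m ≤ 1 / 4) :
    |ε - 2 / π * m + 16 / π ^ 3 * m ^ 2| ≤ 12 * m ^ 3 := by
  have hm₀ : 0 ≤ m := hε.trans (le_of_eq_mul_of_two_mul_le hε ht_lower hm)
  have hπ₃ : 0 < π ^ 3 := pow_pos pi_pos 3
  have hπ₂₇ : (3 : ℝ) ^ 3 < π ^ 3 := by gcongr; exact pi_gt_three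
  have hscale : ε - 2 / π * m + 16 / π ^ 3 * m ^ 2
      = (π ^ 3 * ε - 2 * π ^ 2 * m + 16 * m ^ 2) / π ^ 3 := by
    field_simp
  rw [hscale, abs_div, abs_of_pos hπ₃, div_le_iff₀ hπ₃]
  nlinarith [pow_nonneg hm₀ 3, abs_pi_cube_mul_sub_le hε ht_lower ht_upper hm hm_le]

end Expansion

/-- If `k(m)` denotes (any choice of) the root of
`m·sin(2k) + k·cos(2k) = 0` lying in `[π/4, π/2)`, then
`k(m) = π/4 + (2/π)m − (16/π³)m² + O(m³)` as `m → 0⁺`. -/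
theorem root_asymptotics
    (k : ℝ → ℝ)
    (hk : ∀ m : ℝ, 0 ≤ m → k m ∈ Ico (Real.pi / 4) (Real.pi / 2) ∧
      m * Real.sin (2 * k m) + k m * Real.cos (2 * k m) = 0) :
    ∃ C > 0, ∃ m₀ > 0, ∀ m ∈ Icc (0 : ℝ) m₀,
      |k m - Real.pi / 4 - (2 / Real.pi) * m + (16 / Real.pi ^ 3) * m ^ 2|
        ≤ C * m ^ 3 := by
  refine ⟨12, by norm_num, 1 / 4, by norm_num, fun m ⟨hm₀, hm_le⟩ => ?_⟩
  obtain ⟨⟨hk_ge, hk_lt⟩, hroot⟩ := hk m hm₀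
  obtain ⟨ε, hkε⟩ : ∃ ε, k m = π / 4 + ε := ⟨k m - π / 4, by ring⟩
  rw [hkε] at hk_ge hk_lt hroot ⊢
  have hε₀ : 0 ≤ ε := by linarith
  have hm_eq := eq_mul_tan_of_sin_add_cos_eq_zero ⟨by linarith [pi_pos], by linarith⟩ hroot
  have htan_ge : 2 * ε ≤ tan (2 * ε) := le_tan (by linarith) (by linarith)
  have hεm := le_of_eq_mul_of_two_mul_le hε₀ htan_ge hm_eq
  have htan_le := tan_le_self_add_pow_three (x := 2 * ε) (by linarith) (by linarith)
  convert abs_sub_expansion_le hε₀ htan_ge htan_le hm_eq hm_le using 2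
  ring
end

section
/- Let k : [0,∞) → ℝ be any function such that for every m ≥ 0, k(m) ∈ [π/4, π/2) and m·sin(2k(m)) + k(m)·cos(2k(m)) = 0, and set E(m) = √(m² + k(m)²). Define u₁^m : [−1,1] → ℂ² by u₁^m(t) = (k(m)·cos(k(m)(t+1)) + (E(m)+m)·sin(k(m)(t+1)), k(m)·cos(k(m)(t+1)) − (E(m)−m)·sin(k(m)(t+1))) and N_m = (∫_{−1}^{1} |u₁^m(t)|²_{ℂ²} dt)^{−1/2}. Then there exist constants C > 0 and m₀ > 0 such that for all m ∈ [0, m₀] there holds |N_m − 1/(2k(m))| ≤ C·m. -/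
open MeasureTheory Set

/-- `E(m) = √(m² + k(m)²)`. -/
noncomputable def Efun (k : ℝ → ℝ) (m : ℝ) : ℝ := Real.sqrt (m ^ 2 + (k m) ^ 2)

/-- First component of the (unnormalized) transverse eigenfunction `u₁^m`. -/
noncomputable def ua (k : ℝ → ℝ) (m t : ℝ) : ℝ :=
  k m * Real.cos (k m * (t + 1)) + (Efun k m + m) * Real.sin (k m * (t + 1))

/-- Second component of the (unnormalized) transverse eigenfunction `u₁^m`. -/
noncomputable def ub (k : ℝ → ℝ) (m t : ℝ) : ℝ :=
  k m * Real.cos (k m * (t + 1)) - (Efun k m - m) * Real.sin (k m * (t + 1))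

/-- The normalization constant `N_m = (∫_{-1}^1 |u₁^m|²_{ℂ²} dt)^{-1/2}`. -/
noncomputable def Nfun (k : ℝ → ℝ) (m : ℝ) : ℝ :=
  (Real.sqrt (∫ t in (-1 : ℝ)..1, ((ua k m t) ^ 2 + (ub k m t) ^ 2)))⁻¹

/-!
Expanding the squares, `|u₁^m(t)|² = 2(k² + m²) - 2m² cos 2θ + 2km sin 2θ` with `θ = k(t + 1)`,
so `∫_{-1}^{1} |u₁^m|² = 4k² + O(m)` uniformly as long as `k` stays away from `0`. Since `N_m` is
the inverse square root of this integral and `k ≥ π/4`, `N_m = 1/(2k) + O(m)`.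
-/

open Real

noncomputable def eigenNormSq (a m : ℝ) : ℝ :=
  4 * (a ^ 2 + m ^ 2) - m ^ 2 / a * sin (4 * a) + m * (1 - cos (4 * a))

lemma ua_sq_add_ub_sq (k : ℝ → ℝ) (m t : ℝ) :
    ua k m t ^ 2 + ub k m t ^ 2 = 2 * (k m ^ 2 + m ^ 2) - 2 * m ^ 2 * cos (2 * (k m * (t + 1)))
      + 2 * (k m * m) * sin (2 * (k m * (t + 1))) := by
  have hE : Efun k m ^ 2 = m ^ 2 + k m ^ 2 := sq_sqrt (by positivity)
  rw [ua, ub, cos_two_mul, sin_two_mul]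
  linear_combination (2 * sin (k m * (t + 1)) ^ 2) * hE
    + (2 * k m ^ 2 + 4 * m ^ 2) * sin_sq_add_cos_sq (k m * (t + 1))

lemma integral_expanded_sq_eq_eigenNormSq {a : ℝ} (ha : a ≠ 0) (m : ℝ) :
    ∫ t in (-1 : ℝ)..1, (2 * (a ^ 2 + m ^ 2) - 2 * m ^ 2 * cos (2 * (a * (t + 1)))
      + 2 * (a * m) * sin (2 * (a * (t + 1)))) = eigenNormSq a m := by
  let F : ℝ → ℝ := fun t =>
    2 * (a ^ 2 + m ^ 2) * t - m ^ 2 / a * sin (2 * (a * (t + 1))) - m * cos (2 * (a * (t + 1)))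
  have hF : ∀ t, HasDerivAt F (2 * (a ^ 2 + m ^ 2) - 2 * m ^ 2 * cos (2 * (a * (t + 1)))
      + 2 * (a * m) * sin (2 * (a * (t + 1)))) t := by
    intro t
    have hθ : HasDerivAt (fun t : ℝ => 2 * (a * (t + 1))) (2 * a) t := by
      simpa using (((hasDerivAt_id t).add_const 1).const_mul a).const_mul 2
    refine ((((hasDerivAt_id t).const_mul (2 * (a ^ 2 + m ^ 2))).sub
      ((hθ.sin).const_mul (m ^ 2 / a))).sub ((hθ.cos).const_mul m)).congr_deriv ?_
    field_simp
    ring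
  rw [intervalIntegral.integral_eq_sub_of_hasDerivAt (fun t _ => hF t)
    (by apply Continuous.intervalIntegrable; fun_prop)]
  simp only [F, eigenNormSq]
  norm_num
  ring_nf

lemma Nfun_eq_inv_sqrt_eigenNormSq {k : ℝ → ℝ} {m : ℝ} (hk : k m ≠ 0) :
    Nfun k m = (√(eigenNormSq (k m) m))⁻¹ := by
  simp only [Nfun, ua_sq_add_ub_sq, integral_expanded_sq_eq_eigenNormSq hk]

lemma eigenNormSq_mem_Icc {a m : ℝ} (ha : 1 / 2 ≤ a) (hm₀ : 0 ≤ m) (hm₁ : m ≤ 1) :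
    eigenNormSq a m ∈ Icc ((2 * a) ^ 2) ((2 * a) ^ 2 + 8 * m) := by
  have hquot : m ^ 2 / a ≤ 2 * m ^ 2 := by
    rw [div_le_iff₀ (by linarith)]
    nlinarith [sq_nonneg m]
  have hquot₀ : 0 ≤ m ^ 2 / a := div_nonneg (sq_nonneg m) (by linarith)
  have hsin : |m ^ 2 / a * sin (4 * a)| ≤ 2 * m ^ 2 := by
    rw [abs_mul, abs_of_nonneg hquot₀]
    nlinarith [abs_sin_le_one (4 * a)]
  have hcos₁ := cos_le_one (4 * a)
  have hcos₂ := neg_one_le_cos (4 * a)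
  obtain ⟨hsin₁, hsin₂⟩ := abs_le.mp hsin
  constructor <;> simp only [eigenNormSq] <;> nlinarith

lemma abs_inv_sqrt_sub_inv_le {b s δ : ℝ} (hb : 0 < b) (hlo : b ^ 2 ≤ s) (hhi : s ≤ b ^ 2 + δ) :
    |(√s)⁻¹ - b⁻¹| ≤ δ / (2 * b ^ 3) := by
  have hbs : b ≤ √s := le_sqrt_of_sq_le hlo
  have hs : √s ^ 2 = s := sq_sqrt (by nlinarith)
  have hs₀ : 0 < √s := hb.trans_le hbs
  rw [abs_of_nonpos (by rw [sub_nonpos]; exact inv_anti₀ hb hbs), neg_sub,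
    inv_sub_inv hb.ne' hs₀.ne', div_le_div_iff₀ (by positivity) (by positivity)]
  have hprod : (√s - b) * (√s + b) ≤ δ := by nlinarith
  calc (√s - b) * (2 * b ^ 3) = (√s - b) * (b * (b * b + b * b)) := by ring
    _ ≤ (√s - b) * (b * (√s * √s + √s * b)) := by gcongr
    _ = (√s - b) * (√s + b) * (b * √s) := by ring
    _ ≤ δ * (b * √s) := by gcongr

/-- The normalization constant of the first transverse eigenfunction
satisfies `N_m = 1/(2 k(m)) + O(m)` as `m → 0⁺`. -/
theorem normalization_asymptotics
    (k : ℝ → ℝ)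
    (hk : ∀ m : ℝ, 0 ≤ m → k m ∈ Ico (Real.pi / 4) (Real.pi / 2) ∧
      m * Real.sin (2 * k m) + k m * Real.cos (2 * k m) = 0) :
    ∃ C > 0, ∃ m₀ > 0, ∀ m ∈ Icc (0 : ℝ) m₀,
      |Nfun k m - 1 / (2 * k m)| ≤ C * m := by
  refine ⟨4, by norm_num, 1, one_pos, fun m ⟨hm₀, hm₁⟩ => ?_⟩
  have hka : 1 / 2 ≤ k m := by linarith [(hk m hm₀).1.1, pi_gt_three]
  obtain ⟨hlo, hhi⟩ := eigenNormSq_mem_Icc hka hm₀ hm₁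
  have hb : 1 ≤ 2 * k m := by linarith
  calc |Nfun k m - 1 / (2 * k m)|
      ≤ 8 * m / (2 * (2 * k m) ^ 3) := by
        rw [Nfun_eq_inv_sqrt_eigenNormSq (by linarith), one_div]
        exact abs_inv_sqrt_sub_inv_le (by linarith) hlo hhi
    _ ≤ 8 * m / 2 := by gcongr; nlinarith [one_le_pow₀ (n := 3) hb]
    _ = 4 * m := by ring
end

section
/- Let κ : ℝ → ℝ be square-integrable with ∫_ℝ κ(s)² ds > 0. Then there exists a Lipschitz, compactly supported function f : ℝ → ℝ, not identically zero, such that ∫_ℝ (f′(s))² ds < (1/π²)∫_ℝ κ(s)²·f(s)² ds (where f′ denotes the almost-everywhere derivative); that is, the effective quadratic form q_e takes a negative value. -/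
/-!
Test `q_e` against the plateau functions `trapezoid L`, equal to `1` on `[-L, L]`, to `0` off
`[-2L, 2L]` and linear in between. They are `1/L`-Lipschitz and supported on a set of length `4L`,
so their Dirichlet energy is at most `4/L → 0`, while the potential term is at least
`π⁻² ∫_{-L}^{L} κ² → π⁻² ∫ κ² > 0`. Hence `q_e[trapezoid L] < 0` for large `L`.
-/

open MeasureTheory Set Filter Topology
open scoped NNReal ENNReal

theorem integral_deriv_sq_le_of_lipschitzWith {f : ℝ → ℝ} {K : ℝ≥0} {s : Set ℝ}
    (hf : LipschitzWith K f) (hs : tsupport f ⊆ s) (hs_fin : volume s < ∞) :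
    ∫ x, deriv f x ^ 2 ≤ K ^ 2 * volume.real s := by
  have hzero : ∀ x ∉ s, deriv f x ^ 2 = 0 := fun x hx => by
    rw [Function.notMem_support.mp fun h => hx (hs (support_deriv_subset h))]; ring
  rw [← setIntegral_eq_integral_of_forall_compl_eq_zero hzero]
  refine (Real.le_norm_self _).trans (norm_setIntegral_le_of_norm_le_const hs_fin fun x _ => ?_)
  rw [norm_pow]
  exact pow_le_pow_left₀ (norm_nonneg _) (norm_deriv_le_of_lipschitz hf) 2

noncomputable def trapezoid (L x : ℝ) : ℝ := min 1 (max 0 (2 - |x| / L))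

namespace trapezoid

variable {L : ℝ}

lemma nonneg (L x : ℝ) : 0 ≤ trapezoid L x := le_min zero_le_one (le_max_left _ _)

lemma le_one (L x : ℝ) : trapezoid L x ≤ 1 := min_le_left _ _

lemma eq_one {x : ℝ} (hx : |x| ≤ L) : trapezoid L x = 1 := by
  have : |x| / L ≤ 1 := div_le_one_of_le₀ hx ((abs_nonneg x).trans hx)
  exact min_eq_left (le_max_of_le_right (by linarith))

lemma eq_zero (hL : 0 < L) {x : ℝ} (hx : 2 * L ≤ |x|) : trapezoid L x = 0 := by
  have : 2 ≤ |x| / L := (le_div_iff₀ hL).mpr hx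
  rw [trapezoid, max_eq_left (by linarith), min_eq_right zero_le_one]

lemma lipschitzWith (hL : 0 < L) : LipschitzWith (Real.toNNReal L⁻¹) (trapezoid L) := by
  have hinner : LipschitzWith (Real.toNNReal L⁻¹) fun x : ℝ => 2 - |x| / L := by
    refine LipschitzWith.of_dist_le_mul fun x y => ?_
    rw [Real.dist_eq, Real.dist_eq, Real.coe_toNNReal _ (inv_nonneg.mpr hL.le)]
    calc |(2 - |x| / L) - (2 - |y| / L)| = L⁻¹ * |(|y| - |x|)| := by
          rw [show (2 - |x| / L) - (2 - |y| / L) = L⁻¹ * (|y| - |x|) by ring, abs_mul,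
            abs_of_pos (inv_pos.mpr hL)]
      _ ≤ L⁻¹ * |x - y| := by
          refine mul_le_mul_of_nonneg_left ?_ (inv_nonneg.mpr hL.le)
          exact (abs_abs_sub_abs_le_abs_sub y x).trans_eq (abs_sub_comm y x)
  have h := ((LipschitzWith.id.const_max 0).const_min 1).comp hinner
  rwa [one_mul] at h

lemma tsupport_subset (hL : 0 < L) : tsupport (trapezoid L) ⊆ Icc (-(2 * L)) (2 * L) := by
  refine closure_minimal (fun x hx => ?_) isClosed_Icc
  by_contra hx'
  exact hx (eq_zero hL (le_abs'.mpr (by grind)))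

lemma hasCompactSupport (hL : 0 < L) : HasCompactSupport (trapezoid L) :=
  isCompact_Icc.of_isClosed_subset (isClosed_tsupport _) (tsupport_subset hL)

lemma apply_zero (L : ℝ) : trapezoid L 0 = 1 := by simp [trapezoid]

lemma ne_zero (L : ℝ) : trapezoid L ≠ 0 := fun h => by
  simpa [h] using apply_zero L

lemma integral_deriv_sq_le (hL : 0 < L) : ∫ x, deriv (trapezoid L) x ^ 2 ≤ 4 / L := by
  calc ∫ x, deriv (trapezoid L) x ^ 2
        ≤ (Real.toNNReal L⁻¹ : ℝ) ^ 2 * volume.real (Icc (-(2 * L)) (2 * L)) :=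
        integral_deriv_sq_le_of_lipschitzWith (lipschitzWith hL) (tsupport_subset hL)
          measure_Icc_lt_top
    _ = 4 / L := by
        rw [Real.coe_toNNReal _ (inv_nonneg.mpr hL.le), Real.volume_real_Icc_of_le (by linarith)]
        field_simp
        ring

end trapezoid

theorem setIntegral_le_integral_mul_of_eq_one {α : Type*} [MeasurableSpace α] {μ : Measure α}
    {g φ : α → ℝ} {s : Set α} {C : ℝ} (hs : MeasurableSet s) (hg : Integrable g μ) (hg0 : 0 ≤ g)
    (hφ : AEStronglyMeasurable φ μ) (hφ0 : 0 ≤ φ) (hφC : ∀ x, φ x ≤ C) (hφs : ∀ x ∈ s, φ x = 1) :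
    ∫ x in s, g x ∂μ ≤ ∫ x, g x * φ x ∂μ := by
  have hint : Integrable (fun x => g x * φ x) μ :=
    hg.mul_bdd hφ (Eventually.of_forall fun x => by
      rw [Real.norm_of_nonneg (hφ0 x)]; exact hφC x)
  calc ∫ x in s, g x ∂μ = ∫ x in s, g x * φ x ∂μ :=
        setIntegral_congr_fun hs fun x hx => by rw [hφs x hx, mul_one]
    _ ≤ ∫ x, g x * φ x ∂μ :=
        setIntegral_le_integral hint (Eventually.of_forall fun x => mul_nonneg (hg0 x) (hφ0 x))

theorem exists_pos_div_lt_intervalIntegral {g : ℝ → ℝ} (hg : Integrable g) (hpos : 0 < ∫ x, g x)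
    (c : ℝ) : ∃ L > 0, c / L < ∫ x in -L..L, g x := by
  have hlim : Tendsto (fun L : ℝ => (∫ x in -L..L, g x) - c / L) atTop (𝓝 ((∫ x, g x) - 0)) :=
    (intervalIntegral_tendsto_integral hg tendsto_neg_atTop_atBot tendsto_id).sub
      (tendsto_const_nhds.div_atTop tendsto_id)
  have hgap : (0 : ℝ) < (∫ x, g x) - 0 := by linarith
  obtain ⟨L, hL, hL_gap⟩ :=
    ((eventually_gt_atTop 0).and (hlim.eventually (lt_mem_nhds hgap))).exists
  exact ⟨L, hL, by linarith⟩

/-- If `κ` is square-integrable and not a.e. zero (its squared integral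
is positive), then the effective quadratic form
`q_e[f] = ∫ (|f'|² − (κ²/π²)|f|²)` takes a negative value on some Lipschitz,
compactly supported, nontrivial real function `f`. -/
theorem effective_form_negative_value
    (κ : ℝ → ℝ) (hκ : Integrable (fun s : ℝ => (κ s) ^ 2))
    (hpos : 0 < ∫ s : ℝ, (κ s) ^ 2) :
    ∃ f : ℝ → ℝ, (∃ K : NNReal, LipschitzWith K f) ∧ HasCompactSupport f ∧ f ≠ 0 ∧
      (∫ s : ℝ, (deriv f s) ^ 2)
        < (1 / Real.pi ^ 2) * ∫ s : ℝ, (κ s) ^ 2 * (f s) ^ 2 := by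
  obtain ⟨L, hL, hκL⟩ := exists_pos_div_lt_intervalIntegral hκ hpos (4 * Real.pi ^ 2)
  refine ⟨trapezoid L, ⟨_, trapezoid.lipschitzWith hL⟩, trapezoid.hasCompactSupport hL,
    trapezoid.ne_zero L, ?_⟩
  have hpotential : ∫ x in Ioc (-L) L, κ x ^ 2 ≤ ∫ x, κ x ^ 2 * trapezoid L x ^ 2 :=
    setIntegral_le_integral_mul_of_eq_one measurableSet_Ioc hκ (fun x => sq_nonneg _)
      ((trapezoid.lipschitzWith hL).continuous.pow 2).aestronglyMeasurable
      (fun x => sq_nonneg _) (fun x => pow_le_one₀ (trapezoid.nonneg L x) (trapezoid.le_one L x))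
      (fun x hx => by rw [trapezoid.eq_one (abs_le.mpr ⟨hx.1.le, hx.2⟩), one_pow])
  calc ∫ x, deriv (trapezoid L) x ^ 2 ≤ 4 / L := trapezoid.integral_deriv_sq_le hL
    _ = 1 / Real.pi ^ 2 * (4 * Real.pi ^ 2 / L) := by field_simp
    _ < 1 / Real.pi ^ 2 * ∫ x in -L..L, κ x ^ 2 := by gcongr
    _ ≤ 1 / Real.pi ^ 2 * ∫ x, κ x ^ 2 * trapezoid L x ^ 2 := by
        rw [intervalIntegral.integral_of_le (by linarith)]
        gcongr
end
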